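/- The transformations T_z form a group under composition: for all real z, z′, T_z ∘ T_{z′} = T_{z+z′} as maps on C([0,t];ℝ). In particular T_z ∘ T_{−z} is the identity map. -/

import Mathlib

open MeasureTheory Real

noncomputable def pathA (φ : ℝ → ℝ) (s : ℝ) : ℝ := ∫ u in (0:ℝ)..s, Real.exp (2 * φ u)

noncomputable def pathT (t z : ℝ) (φ : ℝ → ℝ) (s : ℝ) : ℝ :=
  φ s - Real.log (1 + (pathA φ s / pathA φ t) * (Real.exp z - 1))

/-!
Write `q = A_s(φ)/A_t(φ)` and `D_z(φ)(s) = 1 + q (e^z - 1)`, so that `T_z φ = φ - log D_z(φ)`.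
Since `e^{2 T_z φ} = e^{2φ} / D_z(φ)^2` and `A/D_z(φ)` has exactly this derivative,
`A_s(T_z φ) = A_s(φ) / D_z(φ)(s)`; in particular `A_t(T_z φ) = e^{-z} A_t(φ)`.
Hence `D_z(T_{z'} φ) = D_{z+z'}(φ) / D_{z'}(φ)`, and the logarithms telescope.
-/

noncomputable def pathD (t z : ℝ) (φ : ℝ → ℝ) (s : ℝ) : ℝ :=
  1 + (pathA φ s / pathA φ t) * (Real.exp z - 1)

lemma pathT_eq_sub_log_pathD (t z : ℝ) (φ : ℝ → ℝ) (s : ℝ) :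
    pathT t z φ s = φ s - log (pathD t z φ s) := rfl

lemma one_add_mul_exp_sub_one_pos {q : ℝ} (hq₀ : 0 ≤ q) (hq₁ : q ≤ 1) (z : ℝ) :
    0 < 1 + q * (exp z - 1) := by
  rcases le_total 1 (exp z) with h | h
  · nlinarith
  · nlinarith [exp_pos z]

lemma exp_two_mul_sub_log {y : ℝ} (hy : y ≠ 0) (x : ℝ) :
    exp (2 * (x - log y)) = exp (2 * x) / y ^ 2 := by
  rw [mul_sub, exp_sub, show 2 * log y = log (y ^ 2) by rw [log_pow]; norm_num,
    exp_log (by positivity)]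

section

variable {φ : ℝ → ℝ}

lemma pathA_zero : pathA φ 0 = 0 := intervalIntegral.integral_same

variable (hφ : Continuous φ)
include hφ

lemma hasDerivAt_pathA (u : ℝ) : HasDerivAt (pathA φ) (exp (2 * φ u)) u :=
  ((continuous_exp.comp (continuous_const.mul hφ)).integral_hasStrictDerivAt 0 u).hasDerivAt

lemma continuous_pathA : Continuous (pathA φ) :=
  continuous_iff_continuousAt.2 fun u => (hasDerivAt_pathA hφ u).continuousAt

lemma strictMono_pathA : StrictMono (pathA φ) :=
  strictMono_of_deriv_pos fun u => (hasDerivAt_pathA hφ u).deriv ▸ exp_pos _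

lemma pathA_pos {t : ℝ} (ht : 0 < t) : 0 < pathA φ t :=
  pathA_zero (φ := φ) ▸ strictMono_pathA hφ ht

lemma pathD_pos {t : ℝ} (ht : 0 < t) (z : ℝ) {s : ℝ} (hs : 0 ≤ s) (hst : s ≤ t) :
    0 < pathD t z φ s := by
  have hA := strictMono_pathA hφ
  have hAt := pathA_pos hφ ht
  have hAs : 0 ≤ pathA φ s := pathA_zero (φ := φ) ▸ hA.monotone hs
  exact one_add_mul_exp_sub_one_pos (div_nonneg hAs hAt.le)
    (div_le_one_of_le₀ (hA.monotone hst) hAt.le) z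

lemma hasDerivAt_pathA_div_pathD (t z : ℝ) {u : ℝ} (hu : pathD t z φ u ≠ 0) :
    HasDerivAt (fun v => pathA φ v / pathD t z φ v) (exp (2 * φ u) / pathD t z φ u ^ 2) u := by
  have hA := hasDerivAt_pathA hφ u
  have hD : HasDerivAt (pathD t z φ) (exp (2 * φ u) / pathA φ t * (exp z - 1)) u :=
    ((hA.div_const _).mul_const _).const_add 1
  refine (hA.div hD hu).congr_deriv ?_
  rw [pathD]
  ring

lemma pathA_pathT {t : ℝ} (ht : 0 < t) (z : ℝ) {s : ℝ} (hs : 0 ≤ s) (hst : s ≤ t) :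
    pathA (pathT t z φ) s = pathA φ s / pathD t z φ s := by
  have hD : ∀ u ∈ Set.uIcc 0 s, pathD t z φ u ≠ 0 := fun u hu => by
    rw [Set.uIcc_of_le hs] at hu
    exact (pathD_pos hφ ht z hu.1 (hu.2.trans hst)).ne'
  have hDcont : Continuous (pathD t z φ) :=
    continuous_const.add (((continuous_pathA hφ).div_const _).mul continuous_const)
  have hcont : ContinuousOn (fun u => exp (2 * φ u) / pathD t z φ u ^ 2) (Set.uIcc 0 s) :=
    (by fun_prop : Continuous fun u => exp (2 * φ u)).continuousOn.div
      (hDcont.pow 2).continuousOn fun u hu => pow_ne_zero 2 (hD u hu)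
  calc pathA (pathT t z φ) s
      = ∫ u in (0:ℝ)..s, exp (2 * φ u) / pathD t z φ u ^ 2 :=
        intervalIntegral.integral_congr fun u hu => exp_two_mul_sub_log (hD u hu) (φ u)
    _ = pathA φ s / pathD t z φ s - pathA φ 0 / pathD t z φ 0 :=
        intervalIntegral.integral_eq_sub_of_hasDerivAt
          (fun u hu => hasDerivAt_pathA_div_pathD hφ t z (hD u hu)) hcont.intervalIntegrable
    _ = pathA φ s / pathD t z φ s := by rw [pathA_zero, zero_div, sub_zero]

lemma pathD_pathT {t : ℝ} (ht : 0 < t) (z z' : ℝ) {s : ℝ} (hs : 0 ≤ s) (hst : s ≤ t) :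
    pathD t z (pathT t z' φ) s = pathD t (z + z') φ s / pathD t z' φ s := by
  have hAt := (pathA_pos hφ ht).ne'
  have hDs : pathA φ t + pathA φ s * (exp z' - 1) ≠ 0 := by
    have := (pathD_pos hφ ht z' hs hst).ne'
    rwa [pathD, div_mul_eq_mul_div, one_add_div hAt, div_ne_zero_iff, and_iff_left hAt] at this
  have hDt : pathD t z' φ t = exp z' := by
    rw [pathD, div_self hAt, one_mul, add_sub_cancel]
  rw [pathD, pathA_pathT hφ ht z' hs hst, pathA_pathT hφ ht z' ht.le le_rfl, hDt, pathD, pathD,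
    exp_add]
  field_simp
  ring

theorem pathT_pathT {t : ℝ} (ht : 0 < t) (z z' : ℝ) {s : ℝ} (hs : 0 ≤ s) (hst : s ≤ t) :
    pathT t z (pathT t z' φ) s = pathT t (z + z') φ s := by
  rw [pathT_eq_sub_log_pathD, pathD_pathT hφ ht z z' hs hst,
    log_div (pathD_pos hφ ht _ hs hst).ne' (pathD_pos hφ ht _ hs hst).ne',
    pathT_eq_sub_log_pathD, pathT_eq_sub_log_pathD]
  ring

end

lemma pathT_zero (t : ℝ) (φ : ℝ → ℝ) : pathT t 0 φ = φ := by
  ext s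
  simp [pathT]

theorem stmt2 (t : ℝ) (ht : 0 < t) (z z' : ℝ) (φ : ℝ → ℝ) (hφ : Continuous φ)
    (s : ℝ) (hs : 0 ≤ s) (hst : s ≤ t) :
    pathT t z (pathT t z' φ) s = pathT t (z + z') φ s ∧
    pathT t z (pathT t (-z) φ) s = φ s := by
  refine ⟨pathT_pathT hφ ht z z' hs hst, ?_⟩
  rw [pathT_pathT hφ ht z (-z) hs hst, add_neg_cancel, pathT_zero]
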